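/- arXiv:1301.0664 — 2 statements merged into one kernel-verified Lean document; each statement's English description precedes it below -/
import Mathlib

section
/- Let Y be a finite set of vectors in ℝ^d, Y⁺ = {μ : μ · y ≥ 0 for all y ∈ Y}, and Y⊥ = {μ : μ · y = 0 for all y ∈ Y}. Then Y⊥ ⊆ Y⁺, and if there is no collection of positive scalars λ_y with ∑_{y ∈ Y} λ_y y = 0, then the containment is strict (Y⁺ strictly contains Y⊥). -/
/-!
Stiemke's alternative. Let `A : ℝ^Y → ℝ^d` send `c` to `∑ c_v • v`. If no strictly positive `c`
lies in `ker A`, Hahn–Banach separates the open positive orthant from the subspace `ker A` by a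
functional that vanishes on `ker A`, is nonnegative on the coordinate vectors and positive on one
of them. A functional vanishing on `ker A` factors through `A`, hence equals `c ↦ ⟪μ, A c⟫` for
some `μ`, and this `μ` lies in `Y⁺` but not in `Y⊥`.
-/

open scoped RealInnerProductSpace

theorem Submodule.exists_semipositive_mem_dualAnnihilator {ι : Type*} [Fintype ι] [DecidableEq ι]
    (L : Submodule ℝ (ι → ℝ)) (hL : ∀ x ∈ L, ¬ ∀ i, 0 < x i) :
    ∃ φ ∈ L.dualAnnihilator, (∀ i, 0 ≤ φ (Pi.single i 1)) ∧ ∃ i, 0 < φ (Pi.single i 1) := by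
  have hdisj : Disjoint (Set.univ.pi fun _ : ι => Set.Ioi (0 : ℝ)) (L : Set (ι → ℝ)) :=
    Set.disjoint_left.2 fun x hx hxL => hL x hxL fun i => hx i (Set.mem_univ i)
  obtain ⟨f, u, hpos, hL'⟩ := geometric_hahn_banach_open (convex_pi fun _ _ => convex_Ioi 0)
    (isOpen_set_pi Set.finite_univ fun _ _ => isOpen_Ioi) L.convex hdisj
  have hu : u ≤ 0 := by simpa using hL' 0 L.zero_mem
  have hfL : ∀ x ∈ L, f x = 0 := by
    intro x hx
    by_contra hfx
    have := hL' (((u - 1) / f x) • x) (L.smul_mem _ hx)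
    rw [map_smul, smul_eq_mul, div_mul_cancel₀ _ hfx] at this
    linarith
  have hf1 : f 1 < 0 := (hpos 1 fun i _ => Set.mem_Ioi.2 zero_lt_one).trans_le hu
  refine ⟨-(f : (ι → ℝ) →ₗ[ℝ] ℝ), ?_, fun i => ?_, ?_⟩
  · rw [Submodule.mem_dualAnnihilator]
    intro x hx
    simp [hfL x hx]
  · by_contra! hi
    replace hi : 0 < f (Pi.single i 1) := by simpa using hi
    -- `ε` makes `f` vanish at the positive vector `Pi.single i 1 + ε • 1`.
    set ε := f (Pi.single i 1) / -f 1 with hε_def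
    have hε : 0 < ε := div_pos hi (neg_pos.2 hf1)
    have hx : Pi.single i 1 + ε • 1 ∈ Set.univ.pi fun _ : ι => Set.Ioi (0 : ℝ) := by
      intro j _
      have : (0 : ℝ) ≤ Pi.single (M := fun _ => ℝ) i 1 j := by
        rw [Pi.single_apply]; split_ifs <;> norm_num
      simp only [Set.mem_Ioi, Pi.add_apply, Pi.smul_apply, Pi.one_apply, smul_eq_mul, mul_one]
      linarith
    have hfx : f (Pi.single i 1 + ε • 1) = 0 := by
      rw [map_add, map_smul, smul_eq_mul, hε_def, div_neg, neg_mul, div_mul_cancel₀ _ hf1.ne,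
        add_neg_cancel]
    linarith [hpos _ hx]
  · by_contra! h
    have hcoord : ∀ i, 0 ≤ f (Pi.single i 1) := fun i => by simpa using h i
    have hsum : ∑ i, f (Pi.single i 1) = f 1 := by
      rw [← map_sum]
      congr 1
      ext j
      simp
    linarith [Finset.sum_nonneg fun i (_ : i ∈ Finset.univ) => hcoord i]

theorem exists_pos_sum_smul_eq_zero_of_inner_nonneg_imp_eq_zero {ι E : Type*} [Fintype ι]
    [NormedAddCommGroup E] [InnerProductSpace ℝ E] [FiniteDimensional ℝ E] (v : ι → E)
    (h : ∀ μ : E, (∀ i, 0 ≤ ⟪μ, v i⟫) → ∀ i, ⟪μ, v i⟫ = 0) :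
    ∃ c : ι → ℝ, (∀ i, 0 < c i) ∧ ∑ i, c i • v i = 0 := by
  classical
  by_contra! hno
  set A := Fintype.linearCombination ℝ v
  obtain ⟨φ, hφ, hnonneg, i, hi⟩ := (LinearMap.ker A).exists_semipositive_mem_dualAnnihilator
    fun c hc hpos => hno c hpos hc
  rw [← LinearMap.range_dualMap_eq_dualAnnihilator_ker] at hφ
  obtain ⟨g, rfl⟩ := hφ
  set μ := (InnerProductSpace.toDual ℝ E).symm (LinearMap.toContinuousLinearMap g)
  have hμ : ∀ j, ⟪μ, v j⟫ = A.dualMap g (Pi.single j 1) := by simp [μ, A]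
  have := h μ (fun j => (hμ j).ge.trans' (hnonneg j)) i
  rw [hμ] at this
  exact hi.ne' this

theorem stmt_1_general (d : ℕ) (Y : Finset (EuclideanSpace ℝ (Fin d))) :
    {μ : EuclideanSpace ℝ (Fin d) | ∀ v ∈ Y, ⟪μ, v⟫ = 0} ⊆
      {μ : EuclideanSpace ℝ (Fin d) | ∀ v ∈ Y, 0 ≤ ⟪μ, v⟫} ∧
    ((¬ ∃ lam : EuclideanSpace ℝ (Fin d) → ℝ,
        (∀ v ∈ Y, 0 < lam v) ∧ ∑ v ∈ Y, lam v • v = 0) →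
      {μ : EuclideanSpace ℝ (Fin d) | ∀ v ∈ Y, ⟪μ, v⟫ = 0} ⊂
        {μ : EuclideanSpace ℝ (Fin d) | ∀ v ∈ Y, 0 ≤ ⟪μ, v⟫}) := by
  have hsub : {μ : EuclideanSpace ℝ (Fin d) | ∀ v ∈ Y, ⟪μ, v⟫ = 0} ⊆
      {μ : EuclideanSpace ℝ (Fin d) | ∀ v ∈ Y, 0 ≤ ⟪μ, v⟫} := fun μ hμ v hv => (hμ v hv).ge
  refine ⟨hsub, fun hno => hsub.ssubset_of_not_subset fun hsup => hno ?_⟩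
  obtain ⟨c, hc, hsum⟩ := exists_pos_sum_smul_eq_zero_of_inner_nonneg_imp_eq_zero
    (fun v : Y => (v : EuclideanSpace ℝ (Fin d))) fun μ hμ v => hsup (fun w hw => hμ ⟨w, hw⟩) v v.2
  classical
  refine ⟨fun v => if hv : v ∈ Y then c ⟨v, hv⟩ else 0,
    fun v hv => by simpa [hv] using hc ⟨v, hv⟩, ?_⟩
  rw [← Finset.sum_attach]
  simpa using hsum

theorem stmt_1 (d : ℕ) (Y : Finset (EuclideanSpace ℝ (Fin d))) (hY : Y.Nonempty) :
    {μ : EuclideanSpace ℝ (Fin d) | ∀ v ∈ Y, ⟪μ, v⟫ = 0} ⊆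
      {μ : EuclideanSpace ℝ (Fin d) | ∀ v ∈ Y, 0 ≤ ⟪μ, v⟫} ∧
    ((¬ ∃ lam : EuclideanSpace ℝ (Fin d) → ℝ,
        (∀ v ∈ Y, 0 < lam v) ∧ ∑ v ∈ Y, lam v • v = 0) →
      {μ : EuclideanSpace ℝ (Fin d) | ∀ v ∈ Y, ⟪μ, v⟫ = 0} ⊂
        {μ : EuclideanSpace ℝ (Fin d) | ∀ v ∈ Y, 0 ≤ ⟪μ, v⟫}) :=
  stmt_1_general d Y
end

section
/- Let β, γ, δ be real angles not multiples of π, and let μ, μ' be complex numbers of modulus 1 with μ ≠ 1. The 4×4 complex matrix with rows (1, cos β, cos γ, cos δ), (0, sin β, sin γ, sin δ), (1, μ' cos β, μ'μ cos γ, μ cos δ), (0, μ' sin β, μ'μ sin γ, μ sin δ) is singular if and only if A μ'² + B μ' + A = 0, where A = cot β − cot γ and B = −2 cot β + (2 − 2Re(μ)) cot δ + 2Re(μ) cot γ; moreover when A ≠ 0 there is a solution μ' of modulus 1 if and only if |B/(2A)| ≤ 1, in which case Re(μ') = −B/(2A). -/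
/-!
Expanding the determinant gives `μ sin β sin γ sin δ (A μ'² + B μ' + A)` once `μ² + 1` is
rewritten as `2 Re(μ) μ`, which is where `|μ| = 1` enters. For `|μ'| = 1` the same identity
gives `A μ'² + B μ' + A = μ' (2 A Re(μ') + B)`, so the unit roots are exactly the unit numbers
with real part `-B / (2A)`, and such numbers exist iff `|B / (2A)| ≤ 1`.
-/

open Complex

lemma Complex.sq_add_one_eq_two_re_mul {z : ℂ} (hz : ‖z‖ = 1) : z ^ 2 + 1 = 2 * z.re * z := by
  have hnorm : z * (starRingEnd ℂ) z = 1 := by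
    rw [mul_conj, normSq_eq_norm_sq, hz]; norm_num
  have hre : z + (starRingEnd ℂ) z = 2 * z.re := by
    rw [add_conj]; push_cast; ring
  linear_combination z * hre - hnorm

noncomputable def flexMatrix (β γ δ : ℝ) (μ μ' : ℂ) : Matrix (Fin 4) (Fin 4) ℂ :=
  !![1, (Real.cos β : ℂ), (Real.cos γ : ℂ), (Real.cos δ : ℂ);
     0, (Real.sin β : ℂ), (Real.sin γ : ℂ), (Real.sin δ : ℂ);
     1, μ' * Real.cos β, μ' * μ * Real.cos γ, μ * Real.cos δ;
     0, μ' * Real.sin β, μ' * μ * Real.sin γ, μ * Real.sin δ]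

lemma det_flexMatrix (β γ δ : ℝ) (μ μ' : ℂ) :
    (flexMatrix β γ δ μ μ').det =
      μ * Real.sin δ * (Real.cos β * Real.sin γ - Real.sin β * Real.cos γ) * (μ' ^ 2 + 1) +
        μ' * ((μ ^ 2 + 1) * Real.sin β * Real.cos γ * Real.sin δ
          - 2 * μ * Real.cos β * Real.sin γ * Real.sin δ
          - (μ - 1) ^ 2 * Real.sin β * Real.sin γ * Real.cos δ) := by
  simp [flexMatrix, Matrix.det_succ_row_zero, Fin.sum_univ_succ, Fin.succAbove]
  ring

lemma det_flexMatrix_eq_cot {β γ δ : ℝ} (hβ : Real.sin β ≠ 0) (hγ : Real.sin γ ≠ 0)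
    (hδ : Real.sin δ ≠ 0) {μ : ℂ} (hμ : ‖μ‖ = 1) (μ' : ℂ) :
    (flexMatrix β γ δ μ μ').det =
      Real.sin β * Real.sin γ * Real.sin δ * μ *
        (((Real.cot β - Real.cot γ : ℝ) : ℂ) * μ' ^ 2 +
          ((-2 * Real.cot β + (2 - 2 * μ.re) * Real.cot δ + 2 * μ.re * Real.cot γ : ℝ) : ℂ) * μ' +
          ((Real.cot β - Real.cot γ : ℝ) : ℂ)) := by
  have hβ' : (Real.sin β : ℂ) ≠ 0 := ofReal_ne_zero.mpr hβ
  have hγ' : (Real.sin γ : ℂ) ≠ 0 := ofReal_ne_zero.mpr hγ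
  have hδ' : (Real.sin δ : ℂ) ≠ 0 := ofReal_ne_zero.mpr hδ
  rw [det_flexMatrix]
  simp only [Real.cot_eq_cos_div_sin]
  push_cast [-ofReal_sin, -ofReal_cos]
  field_simp
  linear_combination
    μ' * (Real.sin β * Real.cos γ * Real.sin δ - Real.sin β * Real.sin γ * Real.cos δ) *
      sq_add_one_eq_two_re_mul hμ

lemma Complex.palindromic_quadratic_eq_zero_iff {A : ℝ} (hA : A ≠ 0) (B : ℝ) {z : ℂ}
    (hz : ‖z‖ = 1) : (A : ℂ) * z ^ 2 + B * z + A = 0 ↔ z.re = -B / (2 * A) := by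
  have hz0 : z ≠ 0 := norm_ne_zero_iff.mp (hz ▸ one_ne_zero)
  have hfactor : (A : ℂ) * z ^ 2 + B * z + A = z * ((2 * A * z.re + B : ℝ) : ℂ) := by
    push_cast
    linear_combination (A : ℂ) * sq_add_one_eq_two_re_mul hz
  rw [hfactor, mul_eq_zero, or_iff_right hz0, ofReal_eq_zero, eq_div_iff (by positivity)]
  constructor <;> intro h <;> linarith

lemma Complex.exists_norm_eq_one_re_eq_iff (x : ℝ) : (∃ z : ℂ, ‖z‖ = 1 ∧ z.re = x) ↔ |x| ≤ 1 := by
  constructor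
  · rintro ⟨z, hz, rfl⟩
    exact hz ▸ abs_re_le_norm z
  · intro hx
    obtain ⟨hx₁, hx₂⟩ := abs_le.mp hx
    exact ⟨exp (Real.arccos x * I), norm_exp_ofReal_mul_I _,
      by rw [exp_ofReal_mul_I_re, Real.cos_arccos hx₁ hx₂]⟩

theorem stmt_19_general (β γ δ : ℝ)
    (hβ : ∀ n : ℤ, β ≠ n * Real.pi) (hγ : ∀ n : ℤ, γ ≠ n * Real.pi)
    (hδ : ∀ n : ℤ, δ ≠ n * Real.pi)
    (μ : ℂ) (hμ : ‖μ‖ = 1)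
    (A B : ℝ)
    (hA : A = Real.cot β - Real.cot γ)
    (hB : B = -2 * Real.cot β + (2 - 2 * μ.re) * Real.cot δ + 2 * μ.re * Real.cot γ) :
    (∀ μ' : ℂ, ‖μ'‖ = 1 →
      ((!![1, (Real.cos β : ℂ), (Real.cos γ : ℂ), (Real.cos δ : ℂ);
           0, (Real.sin β : ℂ), (Real.sin γ : ℂ), (Real.sin δ : ℂ);
           1, μ' * Real.cos β, μ' * μ * Real.cos γ, μ * Real.cos δ;
           0, μ' * Real.sin β, μ' * μ * Real.sin γ, μ * Real.sin δ] :
          Matrix (Fin 4) (Fin 4) ℂ).det = 0 ↔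
        (A : ℂ) * μ' ^ 2 + (B : ℂ) * μ' + (A : ℂ) = 0)) ∧
    (A ≠ 0 →
      ((∃ μ' : ℂ, ‖μ'‖ = 1 ∧
          (A : ℂ) * μ' ^ 2 + (B : ℂ) * μ' + (A : ℂ) = 0) ↔ |B / (2 * A)| ≤ 1) ∧
      ∀ μ' : ℂ, ‖μ'‖ = 1 →
        (A : ℂ) * μ' ^ 2 + (B : ℂ) * μ' + (A : ℂ) = 0 →
        μ'.re = -B / (2 * A)) := by
  have hsβ : Real.sin β ≠ 0 := Real.sin_ne_zero_iff.mpr fun n => (hβ n).symm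
  have hsγ : Real.sin γ ≠ 0 := Real.sin_ne_zero_iff.mpr fun n => (hγ n).symm
  have hsδ : Real.sin δ ≠ 0 := Real.sin_ne_zero_iff.mpr fun n => (hδ n).symm
  have hμ0 : μ ≠ 0 := norm_ne_zero_iff.mp (hμ ▸ one_ne_zero)
  refine ⟨fun μ' _ => ?_, fun hA0 => ?_⟩
  · change (flexMatrix β γ δ μ μ').det = 0 ↔ _
    have hfactor : (Real.sin β * Real.sin γ * Real.sin δ : ℂ) * μ ≠ 0 := by
      refine mul_ne_zero ?_ hμ0
      exact_mod_cast mul_ne_zero (mul_ne_zero hsβ hsγ) hsδ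
    rw [det_flexMatrix_eq_cot hsβ hsγ hsδ hμ, ← hA, ← hB, mul_eq_zero, or_iff_right hfactor]
  · have hroots : ∀ μ' : ℂ, ‖μ'‖ = 1 →
        ((A : ℂ) * μ' ^ 2 + B * μ' + A = 0 ↔ μ'.re = -B / (2 * A)) :=
      fun μ' hμ' => palindromic_quadratic_eq_zero_iff hA0 B hμ'
    refine ⟨?_, fun μ' hμ' => (hroots μ' hμ').mp⟩
    rw [← abs_neg, ← neg_div, ← exists_norm_eq_one_re_eq_iff]
    exact exists_congr fun μ' => and_congr_right (hroots μ')

theorem stmt_19 (β γ δ : ℝ)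
    (hβ : ∀ n : ℤ, β ≠ n * Real.pi) (hγ : ∀ n : ℤ, γ ≠ n * Real.pi)
    (hδ : ∀ n : ℤ, δ ≠ n * Real.pi)
    (μ : ℂ) (hμ : ‖μ‖ = 1) (hμ1 : μ ≠ 1)
    (A B : ℝ)
    (hA : A = Real.cot β - Real.cot γ)
    (hB : B = -2 * Real.cot β + (2 - 2 * μ.re) * Real.cot δ + 2 * μ.re * Real.cot γ) :
    (∀ μ' : ℂ, ‖μ'‖ = 1 →
      ((!![1, (Real.cos β : ℂ), (Real.cos γ : ℂ), (Real.cos δ : ℂ);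
           0, (Real.sin β : ℂ), (Real.sin γ : ℂ), (Real.sin δ : ℂ);
           1, μ' * Real.cos β, μ' * μ * Real.cos γ, μ * Real.cos δ;
           0, μ' * Real.sin β, μ' * μ * Real.sin γ, μ * Real.sin δ] :
          Matrix (Fin 4) (Fin 4) ℂ).det = 0 ↔
        (A : ℂ) * μ' ^ 2 + (B : ℂ) * μ' + (A : ℂ) = 0)) ∧
    (A ≠ 0 →
      ((∃ μ' : ℂ, ‖μ'‖ = 1 ∧
          (A : ℂ) * μ' ^ 2 + (B : ℂ) * μ' + (A : ℂ) = 0) ↔ |B / (2 * A)| ≤ 1) ∧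
      ∀ μ' : ℂ, ‖μ'‖ = 1 →
        (A : ℂ) * μ' ^ 2 + (B : ℂ) * μ' + (A : ℂ) = 0 →
        μ'.re = -B / (2 * A)) :=
  stmt_19_general β γ δ hβ hγ hδ μ hμ A B hA hB
end
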